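/- Let Q be a quandle and for b ∈ Q write x ⋆⁻¹ b for the inverse right translation, i.e. the unique element with (x ⋆⁻¹ b) ⋆ b = x. Let n ≥ 1 and let f : Qⁿ → Qⁿ be any map. Define F' : Q^{n+1} → Q^{n+1} by F'(x_1, …, x_n, x_{n+1}) = σ_n^{-1}( f(x_1, …, x_n), x_{n+1} ), where σ_n^{-1} : Q^{n+1} → Q^{n+1} sends (y_1, …, y_n, y_{n+1}) to (y_1, …, y_{n−1}, y_{n+1} ⋆⁻¹ y_n, y_n). Then (x_1, …, x_{n+1}) is a fixed point of F' if and only if x_{n+1} = x_n and (x_1, …, x_n) is a fixed point of f; in particular, the projection onto the first n coordinates restricts to a bijection from the fixed-point set of F' onto the fixed-point set of f. -/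

import Mathlib

/-- Negative stabilization step of Markov invariance. Let `Q` be a quandle with
inverse right translations `x ⋆⁻¹ b` (so `(x ⋆⁻¹ b) ⋆ b = x`), and let
`f : Qᴺ → Qᴺ` be any map (here `N = n+1 ≥ 1`). Let `σ⁻¹` be the inverse
elementary braid map on `Q^{N+1}`,
`σ⁻¹(y₁,…,y_N,y_{N+1}) = (y₁,…,y_{N−1}, y_{N+1} ⋆⁻¹ y_N, y_N)`, and let
`F'(x₁,…,x_N,x_{N+1}) = σ⁻¹(f(x₁,…,x_N), x_{N+1})`. Then `x` is a fixed point
of `F'` iff its last coordinate equals its `N`-th one and `(x₁,…,x_N)` is a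
fixed point of `f`; in particular, projection onto the first `N` coordinates is
a bijection from the fixed-point set of `F'` onto that of `f`. -/
theorem markov_negative_stabilization (Q : Type*) (op : Q → Q → Q)
    (hdist : ∀ a b c : Q, op (op a b) c = op (op a c) (op b c))
    (hidem : ∀ a : Q, op a a = a)
    (hbij : ∀ b : Q, Function.Bijective (fun a : Q => op a b))
    (invop : Q → Q → Q)
    (hinv : ∀ x b : Q, op (invop x b) b = x)
    (n : ℕ)
    (f : (Fin (n + 1) → Q) → (Fin (n + 1) → Q))
    (σ' : (Fin (n + 2) → Q) → (Fin (n + 2) → Q))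
    (hσ' : ∀ (y : Fin (n + 2) → Q) (j : Fin (n + 2)),
      σ' y j =
        if j = (⟨n, by omega⟩ : Fin (n + 2)) then
          invop (y ⟨n + 1, by omega⟩) (y ⟨n, by omega⟩)
        else if j = (⟨n + 1, by omega⟩ : Fin (n + 2)) then y ⟨n, by omega⟩
        else y j)
    (F' : (Fin (n + 2) → Q) → (Fin (n + 2) → Q))
    (hF' : ∀ x : Fin (n + 2) → Q,
      F' x = σ' (Fin.snoc (f (Fin.init x)) (x (Fin.last (n + 1))))) :
    (∀ x : Fin (n + 2) → Q,
      F' x = x ↔ (x (Fin.last (n + 1)) = x (⟨n, by omega⟩ : Fin (n + 2)) ∧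
        f (Fin.init x) = Fin.init x)) ∧
    Set.BijOn (fun x : Fin (n + 2) → Q => Fin.init x)
      {x | F' x = x} {x | f x = x} := by
  have hinvself : ∀ a : Q, invop a a = a := by
    intro a
    apply (hbij a).1
    show op (invop a a) a = op a a
    rw [hinv, hidem]
  have hlastcast : (Fin.castSucc (Fin.last n)) = (⟨n, by omega⟩ : Fin (n + 2)) := rfl
  have hlast2 : (⟨n + 1, by omega⟩ : Fin (n + 2)) = Fin.last (n + 1) := rfl
  -- coordinate computations
  have hA : ∀ x : Fin (n + 2) → Q,
      F' x ⟨n, by omega⟩ = invop (x (Fin.last (n + 1))) (f (Fin.init x) (Fin.last n)) := by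
    intro x
    rw [hF', hσ']
    simp only [if_pos rfl, hlast2, Fin.snoc_last, ← hlastcast, Fin.snoc_castSucc]
    simp
  have hB : ∀ x : Fin (n + 2) → Q,
      F' x (Fin.last (n + 1)) = f (Fin.init x) (Fin.last n) := by
    intro x
    rw [hF', hσ']
    have h1 : (Fin.last (n + 1)) ≠ (⟨n, by omega⟩ : Fin (n + 2)) := by
      intro h; have := congrArg Fin.val h; simp [Fin.last] at this
    rw [if_neg h1, if_pos hlast2.symm, ← hlastcast, Fin.snoc_castSucc]
  have hC : ∀ (x : Fin (n + 2) → Q) (i : Fin (n + 1)), i.val < n →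
      F' x (Fin.castSucc i) = f (Fin.init x) i := by
    intro x i hi
    rw [hF', hσ']
    have h1 : Fin.castSucc i ≠ (⟨n, by omega⟩ : Fin (n + 2)) := by
      intro h; have := congrArg Fin.val h; simp at this; omega
    have h2 : Fin.castSucc i ≠ (⟨n + 1, by omega⟩ : Fin (n + 2)) := by
      intro h; have := congrArg Fin.val h; simp at this; omega
    rw [if_neg h1, if_neg h2, Fin.snoc_castSucc]
  have key : ∀ x : Fin (n + 2) → Q,
      F' x = x ↔ (x (Fin.last (n + 1)) = x (⟨n, by omega⟩ : Fin (n + 2)) ∧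
        f (Fin.init x) = Fin.init x) := by
    intro x
    constructor
    · intro h
      have hB' : f (Fin.init x) (Fin.last n) = x (Fin.last (n + 1)) := by
        rw [← hB x, h]
      have hA' : x (Fin.last (n + 1)) = x (⟨n, by omega⟩ : Fin (n + 2)) := by
        have := congrFun h (⟨n, by omega⟩ : Fin (n + 2))
        rw [hA x, hB', hinvself] at this
        exact this
      refine ⟨hA', funext fun i => ?_⟩
      induction i using Fin.lastCases with
      | last =>
        rw [hB', hA']
        show _ = x (Fin.castSucc (Fin.last n))
        rw [hlastcast]
      | cast i' =>
        have hi : (Fin.castSucc i').val < n := i'.isLt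
        have := congrFun h (Fin.castSucc (Fin.castSucc i'))
        rw [hC x _ hi] at this
        exact this
    · rintro ⟨h1, h2⟩
      funext j
      induction j using Fin.lastCases with
      | last =>
        rw [hB x, h2]
        show x (Fin.castSucc (Fin.last n)) = _
        rw [hlastcast, ← h1]
      | cast i =>
        induction i using Fin.lastCases with
        | last =>
          rw [hlastcast, hA x, h2]
          show invop _ (x (Fin.castSucc (Fin.last n))) = _
          rw [hlastcast, ← h1, hinvself, h1]
        | cast i' =>
          have hi : (Fin.castSucc i').val < n := i'.isLt
          rw [hC x _ hi, h2]
          rfl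
  refine ⟨key, ⟨fun x hx => (key x).1 hx |>.2, fun x hx x' hx' hxx' => ?_, fun w hw => ?_⟩⟩
  · have h1 := (key x).1 hx
    have h1' := (key x').1 hx'
    funext j
    induction j using Fin.lastCases with
    | last =>
      rw [h1.1, h1'.1]
      show x (Fin.castSucc (Fin.last n)) = x' (Fin.castSucc (Fin.last n))
      exact congrFun hxx' (Fin.last n)
    | cast i =>
      exact congrFun hxx' i
  · refine ⟨Fin.snoc w (w (Fin.last n)), ?_, ?_⟩
    · show F' _ = _
      rw [key]
      constructor
      · rw [Fin.snoc_last, ← hlastcast, Fin.snoc_castSucc]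
      · rw [Fin.init_snoc]
        exact hw
    · show Fin.init (n := n + 1) (α := fun _ => Q) _ = w
      rw [Fin.init_snoc]
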